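/- Define the order-∞ OSPA trajectory distance by d_T^{(c,∞)}(u,v) = max_{k ∈ D_u ∪ D_v} e_{u,v}(k) if D_u ∪ D_v ≠ ∅ and 0 otherwise. Then d_T^{(c,∞)} satisfies the triangle inequality: for all trajectories u, v, t on 𝕂, d_T^{(c,∞)}(u,v) ≤ d_T^{(c,∞)}(u,t) + d_T^{(c,∞)}(t,v). -/
import Mathlib


open scoped BigOperators

/-- A trajectory on the time window `{1,…,K}` (modeled as `Fin K`): a domain together
with a state map (values outside the domain are irrelevant). -/
structure Traj (K : ℕ) (X : Type*) where
  dom : Finset (Fin K)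
  toFun : Fin K → X

/-- Per-time cost `e_{u,v}(k)` with base metric cut off at `c`. -/
noncomputable def ecost {K : ℕ} {X : Type*} [MetricSpace X] (c : ℝ) (u v : Traj K X)
    (k : Fin K) : ℝ :=
  if k ∈ u.dom ∩ v.dom then min (dist (u.toFun k) (v.toFun k)) c
  else if k ∈ u.dom ∪ v.dom then c
  else 0

/-- Order-∞ OSPA trajectory distance: the maximum per-time cost over `D_u ∪ D_v`,
and `0` if `D_u ∪ D_v = ∅`. -/
noncomputable def dTinf {K : ℕ} {X : Type*} [MetricSpace X] (c : ℝ) (u v : Traj K X) : ℝ :=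
  if h : (u.dom ∪ v.dom).Nonempty then (u.dom ∪ v.dom).sup' h (ecost c u v) else 0

lemma ecost_nonneg {K : ℕ} {X : Type*} [MetricSpace X] {c : ℝ} (hc : 0 < c)
    (u v : Traj K X) (k : Fin K) : 0 ≤ ecost c u v k := by
  unfold ecost
  split_ifs
  · exact le_min dist_nonneg hc.le
  · exact hc.le
  · exact le_refl 0

lemma dTinf_nonneg {K : ℕ} {X : Type*} [MetricSpace X] {c : ℝ} (hc : 0 < c)
    (u v : Traj K X) : 0 ≤ dTinf c u v := by
  unfold dTinf
  split_ifs with h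
  · obtain ⟨k, hk⟩ := h
    exact le_trans (ecost_nonneg hc u v k) (Finset.le_sup' _ hk)
  · exact le_refl 0

lemma ecost_le_dTinf {K : ℕ} {X : Type*} [MetricSpace X] {c : ℝ} (hc : 0 < c)
    (u v : Traj K X) (k : Fin K) : ecost c u v k ≤ dTinf c u v := by
  by_cases hk : k ∈ u.dom ∪ v.dom
  · unfold dTinf
    rw [dif_pos ⟨k, hk⟩]
    exact Finset.le_sup' _ hk
  · have : ecost c u v k = 0 := by
      unfold ecost
      rw [if_neg, if_neg hk]
      intro h
      exact hk (Finset.mem_union_left _ (Finset.mem_of_mem_inter_left h))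
    rw [this]
    exact dTinf_nonneg hc u v

lemma ecost_triangle {K : ℕ} {X : Type*} [MetricSpace X] {c : ℝ} (hc : 0 < c)
    (u v t : Traj K X) (k : Fin K) :
    ecost c u v k ≤ ecost c u t k + ecost c t v k := by
  unfold ecost
  by_cases hu : k ∈ u.dom <;> by_cases hv : k ∈ v.dom <;> by_cases ht : k ∈ t.dom <;>
    simp only [Finset.mem_inter, Finset.mem_union, hu, hv, ht, and_self, and_true, true_and,
      and_false, false_and, or_self, or_true, true_or, or_false, false_or, if_true, if_false,
      ite_true, ite_false]
  · rcases le_total (dist (u.toFun k) (t.toFun k)) c with h1 | h1 <;>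
      rcases le_total (dist (t.toFun k) (v.toFun k)) c with h2 | h2
    · refine le_trans (min_le_left _ _) ?_
      rw [min_eq_left h1, min_eq_left h2]
      exact dist_triangle _ _ _
    · refine le_trans (min_le_right _ _) ?_
      rw [min_eq_right h2]
      exact le_add_of_nonneg_left (le_min dist_nonneg hc.le)
    · refine le_trans (min_le_right _ _) ?_
      rw [min_eq_right h1]
      exact le_add_of_nonneg_right (le_min dist_nonneg hc.le)
    · refine le_trans (min_le_right _ _) ?_
      rw [min_eq_right h1, min_eq_right h2]
      linarith
  · exact le_trans (min_le_right _ _) (by linarith)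
  · exact le_add_of_nonneg_left (le_min dist_nonneg hc.le)
  · linarith
  · exact le_add_of_nonneg_right (le_min dist_nonneg hc.le)
  · linarith
  · linarith
  · linarith

/-- The order-∞ OSPA trajectory distance satisfies the triangle inequality. -/
theorem ospa_trajectory_inf_triangle {K : ℕ} {X : Type*} [MetricSpace X] (hK : 1 ≤ K)
    {c : ℝ} (hc : 0 < c) (u v t : Traj K X) :
    dTinf c u v ≤ dTinf c u t + dTinf c t v := by
  by_cases h : (u.dom ∪ v.dom).Nonempty
  · rw [dTinf, dif_pos h]
    apply Finset.sup'_le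
    intro k _
    exact le_trans (ecost_triangle hc u v t k)
      (add_le_add (ecost_le_dTinf hc u t k) (ecost_le_dTinf hc t v k))
  · rw [dTinf, dif_neg h]
    exact add_nonneg (dTinf_nonneg hc u t) (dTinf_nonneg hc t v)
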